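/- arXiv:2003.05421 — 3 statements merged into one kernel-verified Lean document; each statement's English description precedes it below -/
import Mathlib

section
/- If a sequence (x_n) on the torus T = R/Z exhibits Poissonian pair correlation, i.e. for all s > 0, lim_{N→∞} (1/N) #{1 ≤ m ≠ n ≤ N : ‖x_m - x_n‖ ≤ s/N} = 2s (where ‖·‖ denotes distance to the nearest integer), then (x_n) is equidistributed on T. -/
/-!
Cut `[0, 1)` into `N` cells of width `1 / N` and let `W i` count the points among `x 1, …, x N`
lying in the cyclic window of `J` consecutive cells starting at cell `i`. Every point lies in
exactly `J` windows, so `∑ W i = J N`. Two distinct points whose cells are `d` apart share at most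
`J - d` windows, and their distance is at most `(d + 1) / N`; hence the off-diagonal part of
`∑ W i ^ 2` is at most `∑_{t ≤ J} pairCount (t / N) ≈ N ∑_{t ≤ J} 2 t = J (J + 1) N`, and the
variance `∑ (W i - J) ^ 2` is at most `3 J N`. Averaging `W` over the windows inside an interval of
cells and applying Cauchy–Schwarz, every interval `[a, b)` receives at least
`(b - a - O(J / N) - O(J ^ (-1/2))) N` points. Lower bounds for `[0, a)`, `[a, b)` and `[b, 1)`
add up to `N`, so they are also upper bounds.
-/

open Filter
open scoped Classical BigOperators

noncomputable section

/-- distance from a real number to the nearest integer (the torus norm). -/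
def tdist (y : ℝ) : ℝ := |y - round y|

/-- number of pairs `1 ≤ m ≠ n ≤ N` with `‖x m - x n‖ ≤ ε`. -/
def pairCount (x : ℕ → ℝ) (N : ℕ) (ε : ℝ) : ℕ :=
  ((Finset.Icc 1 N ×ˢ Finset.Icc 1 N).filter
    (fun p => p.1 ≠ p.2 ∧ tdist (x p.1 - x p.2) ≤ ε)).card

/-- equidistribution on the torus: for every interval `[a,b) ⊆ [0,1)`,
the proportion of the first `N` points landing in it tends to `b - a`. -/
def Equidistributed (x : ℕ → ℝ) : Prop :=
  ∀ a b : ℝ, 0 ≤ a → a ≤ b → b ≤ 1 →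
    Tendsto (fun N : ℕ =>
      (((Finset.Icc 1 N).filter
        (fun n => a ≤ Int.fract (x n) ∧ Int.fract (x n) < b)).card : ℝ) / N)
      atTop (nhds (b - a))

open Finset

namespace PairCorrelation

variable {x : ℕ → ℝ} {N J c i lo hi : ℕ}

/-- `(c - i) mod N` for `c, i < N`, written so that no truncated subtraction occurs. -/
def cyclicSub (N c i : ℕ) : ℕ := (c + N - i) % N

lemma cyclicSub_eq (hc : c < N) (hi : i < N) :
    cyclicSub N c i = if i ≤ c then c - i else c + N - i := by
  unfold cyclicSub
  split_ifs with h
  · rw [show c + N - i = c - i + N by omega, Nat.add_mod_right, Nat.mod_eq_of_lt (by omega)]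
  · exact Nat.mod_eq_of_lt (by omega)

lemma cyclicSub_lt (hc : c < N) : cyclicSub N c i < N := Nat.mod_lt _ (by omega)

lemma cyclicSub_cyclicSub (hc : c < N) (hi : i < N) : cyclicSub N c (cyclicSub N c i) = i := by
  rw [cyclicSub_eq hc (cyclicSub_lt hc), cyclicSub_eq hc hi]
  split_ifs <;> omega

lemma cyclicSub_injOn (hc : c < N) : Set.InjOn (cyclicSub N c) (range N) := by
  intro i hi j hj hij
  rw [← cyclicSub_cyclicSub hc (mem_range.1 hi), hij, cyclicSub_cyclicSub hc (mem_range.1 hj)]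

lemma card_filter_cyclicSub_lt (hc : c < N) (hJ : J ≤ N) :
    #{i ∈ range N | cyclicSub N c i < J} = J := by
  calc #{i ∈ range N | cyclicSub N c i < J} = #{k ∈ range N | k < J} := by
        refine card_nbij' (cyclicSub N c) (cyclicSub N c) ?_ ?_ ?_ ?_ <;> intro i hi <;>
          simp only [coe_filter, Set.mem_ofPred_eq, mem_range] at hi ⊢
        · exact ⟨cyclicSub_lt hc, hi.2⟩
        · exact ⟨cyclicSub_lt hc, by rw [cyclicSub_cyclicSub hc hi.1]; exact hi.2⟩
        · exact cyclicSub_cyclicSub hc hi.1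
        · exact cyclicSub_cyclicSub hc hi.1
    _ = #(range J) := congrArg card (by ext; simp only [mem_filter, mem_range]; omega)
    _ = J := card_range J

lemma cyclicSub_modEq (hi : i ≤ N) : (cyclicSub N c i : ℤ) ≡ c - i [ZMOD N] := by
  have h : (cyclicSub N c i : ℤ) = ((c : ℤ) + N - i) % N := by
    rw [cyclicSub, Int.natCast_mod, Nat.cast_sub (by omega)]
    push_cast
    rfl
  rw [h]
  refine (Int.mod_modEq _ _).trans ?_
  exact Int.modEq_iff_dvd.2 ⟨-1, by ring⟩

lemma cyclicSub_lt_iff (hc : c < N) (hJ : 0 < J) (hiJ : i + J ≤ N) :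
    cyclicSub N c i < J ↔ i ≤ c ∧ c < i + J := by
  rw [cyclicSub_eq hc (by omega)]
  split_ifs <;> omega

def HasPoissonianPairCorrelation (x : ℕ → ℝ) : Prop :=
  ∀ s : ℝ, 0 < s → Tendsto (fun N : ℕ => (pairCount x N (s / N) : ℝ) / N) atTop (nhds (2 * s))

def cell (x : ℕ → ℝ) (N n : ℕ) : ℕ := ⌊Int.fract (x n) * N⌋₊

/-- The number of `x 1, …, x N` whose cell lies in the cyclic window `i, i + 1, …, i + J - 1`
(mod `N`). -/
def windowCount (x : ℕ → ℝ) (N J i : ℕ) : ℕ := #{n ∈ Icc 1 N | cyclicSub N (cell x N n) i < J}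

def windowVariance (x : ℕ → ℝ) (N J : ℕ) : ℝ :=
  ∑ i ∈ range N, ((windowCount x N J i : ℝ) - J) ^ 2

lemma cell_lt (hN : 0 < N) (n : ℕ) : cell x N n < N := by
  have hN' : (0 : ℝ) < N := by exact_mod_cast hN
  rw [cell, Nat.floor_lt (mul_nonneg (Int.fract_nonneg _) hN'.le)]
  nlinarith [Int.fract_lt_one (x n)]

lemma cell_le (n : ℕ) : (cell x N n : ℝ) ≤ Int.fract (x n) * N :=
  Nat.floor_le (mul_nonneg (Int.fract_nonneg _) (Nat.cast_nonneg _))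

lemma lt_cell_add_one (n : ℕ) : Int.fract (x n) * N < cell x N n + 1 := Nat.lt_floor_add_one _

lemma tdist_sub_le_of_modEq (hN : 0 < N) {m n : ℕ} {d : ℤ}
    (hd : d ≡ cell x N m - cell x N n [ZMOD N]) : tdist (x m - x n) ≤ (|(d : ℝ)| + 1) / N := by
  obtain ⟨k, hk⟩ := hd.dvd
  have hN' : (0 : ℝ) < N := by exact_mod_cast hN
  have hk' : (cell x N m : ℝ) - cell x N n - d = N * k := by exact_mod_cast hk
  have hfract : |Int.fract (x m) * N - cell x N m - (Int.fract (x n) * N - cell x N n)| < 1 := by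
    rw [abs_sub_lt_iff]
    constructor <;> linarith [cell_le (x := x) (N := N) m, cell_le (x := x) (N := N) n,
      lt_cell_add_one (x := x) (N := N) m, lt_cell_add_one (x := x) (N := N) n]
  rw [le_div_iff₀ hN']
  calc tdist (x m - x n) * N ≤ |x m - x n - ((⌊x m⌋ - ⌊x n⌋ + k : ℤ) : ℝ)| * N := by
        gcongr
        exact round_le _ _
    _ = |Int.fract (x m) * N - cell x N m - (Int.fract (x n) * N - cell x N n) + d| := by
        rw [← abs_of_pos hN', ← abs_mul, abs_of_pos hN']
        congr 1
        simp only [Int.fract]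
        push_cast
        linear_combination hk'
    _ ≤ |(d : ℝ)| + 1 := by linarith [abs_add_le (Int.fract (x m) * N - cell x N m -
        (Int.fract (x n) * N - cell x N n)) (d : ℝ)]

lemma sum_windowCount (hJ : J ≤ N) : ∑ i ∈ range N, windowCount x N J i = J * N := by
  calc ∑ i ∈ range N, windowCount x N J i
      = ∑ n ∈ Icc 1 N, #{i ∈ range N | cyclicSub N (cell x N n) i < J} :=
        sum_card_bipartiteAbove_eq_sum_card_bipartiteBelow _
    _ = ∑ n ∈ Icc 1 N, J := sum_congr rfl fun n hn =>
        card_filter_cyclicSub_lt (cell_lt (by simp only [mem_Icc] at hn; omega) n) hJ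
    _ = J * N := by simp [mul_comm]

lemma card_windows_pair_le (hJN : 2 * J ≤ N) (m n : ℕ) :
    #{i ∈ range N | cyclicSub N (cell x N m) i < J ∧ cyclicSub N (cell x N n) i < J}
      ≤ #{t ∈ Icc 1 J | tdist (x m - x n) ≤ ((t : ℕ) : ℝ) / N} := by
  set u := cyclicSub N (cell x N m)
  set v := cyclicSub N (cell x N n)
  have hdiff : ∀ i ∈ range N, ((u i : ℤ) - v i) ≡ cell x N m - cell x N n [ZMOD N] := fun i hi =>
    ((cyclicSub_modEq (mem_range.1 hi).le).sub (cyclicSub_modEq (mem_range.1 hi).le)).trans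
      (by rw [sub_sub_sub_cancel_right])
  -- `u i - v i` is determined mod `N` and `|u i - v i| < J ≤ N / 2`, so it does not depend on `i`;
  -- hence `i ↦ J - min (u i) (v i)` is injective, and it exceeds `|u i - v i|`.
  refine card_le_card_of_injOn (fun i => J - min (u i) (v i)) ?_ ?_
  · intro i hi
    simp only [coe_filter, Set.mem_ofPred_eq, mem_range] at hi ⊢
    obtain ⟨hiN, hu, hv⟩ := hi
    refine ⟨by simp only [mem_Icc]; omega, ?_⟩
    refine (tdist_sub_le_of_modEq (by omega) (hdiff i (mem_range.2 hiN))).trans ?_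
    gcongr
    have key : |(u i : ℤ) - v i| + 1 ≤ ((J - min (u i) (v i) : ℕ) : ℤ) := by grind
    exact_mod_cast key
  · intro i hi j hj hij
    simp only [coe_filter, Set.mem_ofPred_eq, mem_range] at hi hj hij
    have hN : 0 < N := by omega
    have hsame : (u i : ℤ) - v i = u j - v j := by
      have := Int.eq_zero_of_abs_lt_dvd ((hdiff i (mem_range.2 hi.1)).trans
        (hdiff j (mem_range.2 hj.1)).symm).dvd (by rw [abs_lt]; constructor <;> omega)
      omega
    exact cyclicSub_injOn (cell_lt (x := x) hN m) (mem_range.2 hi.1) (mem_range.2 hj.1)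
      (show u i = u j by omega)

lemma pairCount_eq_card_offDiag (ε : ℝ) :
    pairCount x N ε = #{p ∈ (Icc 1 N).offDiag | tdist (x p.1 - x p.2) ≤ ε} := by
  rw [pairCount]
  congr 1
  ext p
  simp only [mem_filter, mem_product, mem_offDiag]
  tauto

lemma sum_windowCount_sq_le (hJN : 2 * J ≤ N) :
    ∑ i ∈ range N, windowCount x N J i ^ 2
      ≤ J * N + ∑ t ∈ Icc 1 J, pairCount x N ((t : ℕ) / N) := by
  set r : ℕ → ℕ × ℕ → Prop := fun i p =>
    cyclicSub N (cell x N p.1) i < J ∧ cyclicSub N (cell x N p.2) i < J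
  calc ∑ i ∈ range N, windowCount x N J i ^ 2
      = ∑ i ∈ range N, #{p ∈ Icc 1 N ×ˢ Icc 1 N | r i p} := by
        refine sum_congr rfl fun i _ => ?_
        rw [sq, windowCount, ← card_product, ← filter_product]
    _ = ∑ p ∈ Icc 1 N ×ˢ Icc 1 N, #{i ∈ range N | r i p} :=
        sum_card_bipartiteAbove_eq_sum_card_bipartiteBelow _
    _ = ∑ p ∈ (Icc 1 N).diag, #{i ∈ range N | r i p}
          + ∑ p ∈ (Icc 1 N).offDiag, #{i ∈ range N | r i p} := by
        rw [← sum_union (disjoint_diag_offDiag _), diag_union_offDiag]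
    _ ≤ J * N + ∑ t ∈ Icc 1 J, pairCount x N ((t : ℕ) / N) := by
        refine add_le_add (le_of_eq ?_) ?_
        · calc ∑ p ∈ (Icc 1 N).diag, #{i ∈ range N | r i p} = ∑ n ∈ Icc 1 N, J := by
                rw [sum_diag]
                refine sum_congr rfl fun n hn => ?_
                simp only [r, and_self]
                simp only [mem_Icc] at hn
                exact card_filter_cyclicSub_lt (cell_lt (by omega) n) (by omega)
            _ = J * N := by simp [mul_comm]
        · calc ∑ p ∈ (Icc 1 N).offDiag, #{i ∈ range N | r i p}
              ≤ ∑ p ∈ (Icc 1 N).offDiag,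
                  #{t ∈ Icc 1 J | tdist (x p.1 - x p.2) ≤ ((t : ℕ) : ℝ) / N} :=
                sum_le_sum fun p _ => card_windows_pair_le hJN p.1 p.2
            _ = ∑ t ∈ Icc 1 J, pairCount x N ((t : ℕ) / N) := by
                simp only [pairCount_eq_card_offDiag]
                exact sum_card_bipartiteAbove_eq_sum_card_bipartiteBelow _

lemma windowVariance_le (hJN : 2 * J ≤ N) :
    windowVariance x N J
      ≤ J * N - J ^ 2 * N + ∑ t ∈ Icc 1 J, (pairCount x N ((t : ℕ) / N) : ℝ) := by
  have hsum : ∑ i ∈ range N, (windowCount x N J i : ℝ) = J * N := by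
    exact_mod_cast sum_windowCount (x := x) (by omega : J ≤ N)
  have hsq : ∑ i ∈ range N, (windowCount x N J i : ℝ) ^ 2
      ≤ J * N + ∑ t ∈ Icc 1 J, (pairCount x N ((t : ℕ) / N) : ℝ) := by
    exact_mod_cast sum_windowCount_sq_le (x := x) hJN
  calc windowVariance x N J
      = ∑ i ∈ range N, (windowCount x N J i : ℝ) ^ 2
          - 2 * J * ∑ i ∈ range N, (windowCount x N J i : ℝ) + N * J ^ 2 := by
        simp only [windowVariance, sub_sq, sum_add_distrib, sum_sub_distrib, ← sum_mul, ← mul_sum,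
          sum_const, card_range, nsmul_eq_mul]
        ring
    _ ≤ _ := by rw [hsum]; linarith

lemma sum_Icc_two_mul (J : ℕ) : ∑ t ∈ Icc 1 J, (2 * t : ℝ) = J * (J + 1) := by
  induction J with
  | zero => simp
  | succ J ih =>
    rw [sum_Icc_succ_top (by omega), ih]
    push_cast
    ring

lemma eventually_windowVariance_le (h : HasPoissonianPairCorrelation x) (hJ : 0 < J) :
    ∀ᶠ N : ℕ in atTop, windowVariance x N J ≤ 3 * J * N := by
  have hlim : Tendsto (fun N : ℕ => ∑ t ∈ Icc 1 J, (pairCount x N ((t : ℕ) / N) : ℝ) / N) atTop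
      (nhds (J * (J + 1))) := by
    rw [← sum_Icc_two_mul]
    exact tendsto_finsetSum _ fun t ht => h t (by simp only [mem_Icc] at ht; exact_mod_cast ht.1)
  have hJ' : (0 : ℝ) < J := by exact_mod_cast hJ
  filter_upwards [hlim.eventually_lt_const (by linarith : (J : ℝ) * (J + 1) < J * (J + 1) + J),
    eventually_ge_atTop (2 * J)] with N hP hN
  have hN' : (0 : ℝ) < N := by exact_mod_cast (by omega : 0 < N)
  rw [← sum_div, div_lt_iff₀ hN'] at hP
  nlinarith [windowVariance_le (x := x) hN]

lemma sum_abs_le_sqrt_card_mul_sum_sq {ι : Type*} {s t : Finset ι} (f : ι → ℝ) (hst : s ⊆ t) :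
    ∑ i ∈ s, |f i| ≤ √(#t * ∑ i ∈ t, f i ^ 2) := by
  refine (le_abs_self _).trans (Real.abs_le_sqrt ?_)
  calc (∑ i ∈ s, |f i|) ^ 2 ≤ #s * ∑ i ∈ s, |f i| ^ 2 := sq_sum_le_card_mul_sum_sq
    _ ≤ #t * ∑ i ∈ t, f i ^ 2 := by
      simp only [sq_abs]
      gcongr

lemma sum_windowCount_Ico_le (hJ : 0 < J) (hhi : hi ≤ N) :
    ∑ k ∈ Ico lo (hi + 1 - J), windowCount x N J k
      ≤ J * #{n ∈ Icc 1 N | lo ≤ cell x N n ∧ cell x N n < hi} := by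
  calc ∑ k ∈ Ico lo (hi + 1 - J), windowCount x N J k
      = ∑ k ∈ Ico lo (hi + 1 - J), #{n ∈ Icc 1 N | k ≤ cell x N n ∧ cell x N n < k + J} := by
        refine sum_congr rfl fun k hk => congrArg card (filter_congr fun n hn => ?_)
        simp only [mem_Ico, mem_Icc] at hk hn
        exact cyclicSub_lt_iff (cell_lt (by omega) n) hJ (by omega)
    _ = ∑ n ∈ Icc 1 N, #{k ∈ Ico lo (hi + 1 - J) | k ≤ cell x N n ∧ cell x N n < k + J} :=
        sum_card_bipartiteAbove_eq_sum_card_bipartiteBelow _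
    _ ≤ ∑ n ∈ Icc 1 N, if lo ≤ cell x N n ∧ cell x N n < hi then J else 0 := by
        refine sum_le_sum fun n _ => ?_
        split_ifs with hn
        · calc _ ≤ #(Icc (cell x N n + 1 - J) (cell x N n)) :=
                card_le_card fun k hk => by simp only [mem_filter, mem_Ico, mem_Icc] at hk ⊢; omega
            _ ≤ J := by simp only [Nat.card_Icc]; omega
        · refine (card_eq_zero.2 (filter_eq_empty_iff.2 fun k hk => ?_)).le
          simp only [mem_Ico] at hk
          omega
    _ = J * #{n ∈ Icc 1 N | lo ≤ cell x N n ∧ cell x N n < hi} := by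
        rw [← sum_filter, sum_const, smul_eq_mul, mul_comm]

lemma sub_le_card_cells (hJ : 0 < J) (hhi : hi ≤ N) :
    (hi : ℝ) - lo - J - √(N * windowVariance x N J) / J
      ≤ #{n ∈ Icc 1 N | lo ≤ cell x N n ∧ cell x N n < hi} := by
  set K := Ico lo (hi + 1 - J)
  set C := #{n ∈ Icc 1 N | lo ≤ cell x N n ∧ cell x N n < hi}
  have hJ' : (0 : ℝ) < J := by exact_mod_cast hJ
  have hK : (hi : ℝ) - lo - J ≤ #K := by
    have : hi + 1 ≤ #K + lo + J := by simp only [K, Nat.card_Ico]; omega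
    have : (hi : ℝ) + 1 ≤ #K + lo + J := by exact_mod_cast this
    linarith
  have hdev := sum_abs_le_sqrt_card_mul_sum_sq (fun k => (windowCount x N J k : ℝ) - J)
    (show K ⊆ range N from fun k hk => by simp only [K, mem_Ico, mem_range] at hk ⊢; omega)
  rw [card_range] at hdev
  have hwin : (#K : ℝ) * J - √(N * windowVariance x N J) ≤ J * C := by
    calc (#K : ℝ) * J - √(N * windowVariance x N J)
        ≤ ∑ k ∈ K, ((J : ℝ) - |(windowCount x N J k : ℝ) - J|) := by
          rw [sum_sub_distrib, sum_const, nsmul_eq_mul]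
          exact sub_le_sub_left hdev _
      _ ≤ ∑ k ∈ K, (windowCount x N J k : ℝ) :=
          sum_le_sum fun k _ => by linarith [neg_abs_le ((windowCount x N J k : ℝ) - J)]
      _ ≤ J * C := by exact_mod_cast sum_windowCount_Ico_le hJ hhi
  calc (hi : ℝ) - lo - J - √(N * windowVariance x N J) / J
      = (((hi : ℝ) - lo - J) * J - √(N * windowVariance x N J)) / J := by field_simp
    _ ≤ J * C / J := by gcongr; nlinarith
    _ = C := by field_simp

def countIn (x : ℕ → ℝ) (a b : ℝ) (N : ℕ) : ℕ :=
  #{n ∈ Icc 1 N | a ≤ Int.fract (x n) ∧ Int.fract (x n) < b}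

lemma countIn_add_countIn {a b c : ℝ} (hab : a ≤ b) (hbc : b ≤ c) (N : ℕ) :
    countIn x a b N + countIn x b c N = countIn x a c N := by
  rw [countIn, countIn, ← card_union_of_disjoint (disjoint_filter.2 fun n _ h₁ h₂ => by
    linarith [h₁.2, h₂.1]), ← filter_or, countIn]
  refine congrArg card (filter_congr fun n _ => ?_)
  constructor
  · rintro (⟨h₁, h₂⟩ | ⟨h₁, h₂⟩) <;> constructor <;> linarith
  · rintro ⟨h₁, h₂⟩
    rcases lt_or_ge (Int.fract (x n)) b with h | h
    exacts [Or.inl ⟨h₁, h⟩, Or.inr ⟨h, h₂⟩]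

lemma countIn_zero_one (N : ℕ) : countIn x 0 1 N = N := by
  rw [countIn, filter_true_of_mem fun n _ => ⟨Int.fract_nonneg _, Int.fract_lt_one _⟩]
  simp

lemma card_cells_le_countIn {a b : ℝ} (hN : 0 < N) :
    #{n ∈ Icc 1 N | ⌈a * N⌉₊ ≤ cell x N n ∧ cell x N n < ⌊b * N⌋₊} ≤ countIn x a b N := by
  have hN' : (0 : ℝ) < N := by exact_mod_cast hN
  refine card_le_card (monotone_filter_right _ fun n _ hn => ?_)
  obtain ⟨hlo, hhi⟩ := hn
  rw [Nat.ceil_le] at hlo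
  rw [Nat.lt_iff_add_one_le, Nat.le_floor_iff' (by omega)] at hhi
  push_cast at hhi
  exact ⟨le_of_mul_le_mul_right (hlo.trans (cell_le n)) hN',
    lt_of_mul_lt_mul_right ((lt_cell_add_one n).trans_le hhi) hN'.le⟩

theorem eventually_sub_le_countIn_div (h : HasPoissonianPairCorrelation x) {a b ε : ℝ}
    (ha : 0 ≤ a) (hb : b ≤ 1) (hε : 0 < ε) :
    ∀ᶠ N : ℕ in atTop, b - a - ε ≤ countIn x a b N / N := by
  -- `12 ≤ ε ^ 2 * J` is what makes `√(N * (3 * J * N)) / J ≤ ε / 2 * N`.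
  obtain ⟨J, hJ⟩ := exists_nat_gt (12 / ε ^ 2)
  have hJ' : (0 : ℝ) < J := (by positivity : (0 : ℝ) < 12 / ε ^ 2).trans hJ
  have hεJ : 12 ≤ ε ^ 2 * J := by rw [div_lt_iff₀ (by positivity)] at hJ; linarith
  have hlarge : ∀ᶠ N : ℕ in atTop, (J : ℝ) + 2 ≤ ε / 2 * N :=
    (tendsto_natCast_atTop_atTop.const_mul_atTop (by positivity)).eventually_ge_atTop _
  filter_upwards [eventually_windowVariance_le h (by exact_mod_cast hJ'), hlarge,
    eventually_gt_atTop 0] with N hV hN hN0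
  have hN' : (0 : ℝ) < N := by exact_mod_cast hN0
  have hhiN : ⌊b * N⌋₊ ≤ N := Nat.floor_le_of_le (mul_le_of_le_one_left hN'.le hb)
  have hcells := sub_le_card_cells (x := x) (lo := ⌈a * N⌉₊) (by exact_mod_cast hJ') hhiN
  have hsqrt : √(N * windowVariance x N J) / J ≤ ε / 2 * N := by
    rw [div_le_iff₀ hJ', Real.sqrt_le_iff]
    constructor
    · positivity
    · nlinarith [mul_le_mul_of_nonneg_left hV hN'.le]
  have hlo : (⌈a * N⌉₊ : ℝ) < a * N + 1 := Nat.ceil_lt_add_one (by positivity)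
  have hhi : b * N < ⌊b * N⌋₊ + 1 := Nat.lt_floor_add_one _
  have hcount : (#{n ∈ Icc 1 N | ⌈a * N⌉₊ ≤ cell x N n ∧ cell x N n < ⌊b * N⌋₊} : ℝ)
      ≤ countIn x a b N := by exact_mod_cast card_cells_le_countIn hN0
  rw [le_div_iff₀ hN']
  linarith

theorem equidistributed_of_forall_eventually
    (hx : ∀ a b ε : ℝ, 0 ≤ a → b ≤ 1 → 0 < ε →
      ∀ᶠ N : ℕ in atTop, b - a - ε ≤ countIn x a b N / N) :
    Equidistributed x := by
  intro a b ha hab hb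
  change Tendsto (fun N : ℕ => (countIn x a b N : ℝ) / N) atTop (nhds (b - a))
  have hsplit : ∀ N, (countIn x a b N : ℝ) = N - countIn x 0 a N - countIn x b 1 N := by
    intro N
    have h₁ := countIn_add_countIn (x := x) ha hab N
    have h₂ := countIn_add_countIn (x := x) (ha.trans hab) hb N
    rw [countIn_zero_one] at h₂
    rw [eq_sub_iff_add_eq, eq_sub_iff_add_eq]
    exact_mod_cast (by omega : countIn x a b N + countIn x b 1 N + countIn x 0 a N = N)
  refine tendsto_order.2 ⟨fun l hl => ?_, fun u hu => ?_⟩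
  · filter_upwards [hx a b ((b - a - l) / 2) ha hb (by linarith)] with N hN
    linarith
  · have hε : 0 < (u - (b - a)) / 3 := by linarith
    filter_upwards [hx 0 a _ le_rfl (hab.trans hb) hε, hx b 1 _ (ha.trans hab) le_rfl hε,
      eventually_gt_atTop 0] with N h₀ h₁ hN
    have hN' : (0 : ℝ) < N := by exact_mod_cast hN
    have : (countIn x a b N : ℝ) / N = 1 - countIn x 0 a N / N - countIn x b 1 N / N := by
      rw [hsplit]; field_simp
    linarith

end PairCorrelation

/-- Poissonian pair correlation implies equidistribution. -/
theorem poissonian_pair_correlation_implies_equidistribution (x : ℕ → ℝ)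
    (h : ∀ s : ℝ, 0 < s →
      Tendsto (fun N : ℕ => (pairCount x N (s / N) : ℝ) / N) atTop (nhds (2 * s))) :
    Equidistributed x :=
  PairCorrelation.equidistributed_of_forall_eventually fun _ _ _ ha hb hε =>
    PairCorrelation.eventually_sub_le_countIn_div h ha hb hε
end
end

section
/- Let (y_n) be the sequence (x_1, -x_1, x_2, -x_2, ...) where the x_n are i.i.d. uniform on T. Then for every even N, #{1 ≤ m,n,k,l ≤ N with {m,n} ≠ {k,l} as multisets : y_m + y_n - y_k - y_l = 0} ≥ N²/4 - N/2, and consequently (y_n) does not exhibit Poissonian correlation of four-fold differences. -/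
/-
Each pair `(y_{2a-1}, y_{2a}) = (x_a, -x_a)` sums to zero, so for any two distinct pairs `a ≠ b`
the quadruple `(2a-1, 2a, 2b-1, 2b)` is a nontrivial exact four-fold coincidence. Among the first
`N = 2M` terms this gives `M² - M` of them, a positive proportion of `N²`; but Poissonian
correlation would force the number of quadruples within `s / N²` of zero to be about `2sN²`,
which is smaller for small `s`.
-/

open Filter
open scoped Classical BigOperators

noncomputable section

/-- number of quadruples `1 ≤ m,n,k,l ≤ N` with multisets `{m,n} ≠ {k,l}` and
`‖y_m + y_n - y_k - y_l‖ ≤ ε`. -/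
def fourCount (y : ℕ → ℝ) (N : ℕ) (ε : ℝ) : ℕ :=
  ((((Finset.Icc 1 N ×ˢ Finset.Icc 1 N) ×ˢ (Finset.Icc 1 N ×ˢ Finset.Icc 1 N))).filter
    (fun p => ({p.1.1, p.1.2} : Multiset ℕ) ≠ ({p.2.1, p.2.2} : Multiset ℕ) ∧
      tdist (y p.1.1 + y p.1.2 - y p.2.1 - y p.2.2) ≤ ε)).card

/-- number of quadruples with multisets `{m,n} ≠ {k,l}` and `y_m + y_n - y_k - y_l = 0`
on the torus. -/
def fourCountZero (y : ℕ → ℝ) (N : ℕ) : ℕ :=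
  ((((Finset.Icc 1 N ×ˢ Finset.Icc 1 N) ×ˢ (Finset.Icc 1 N ×ˢ Finset.Icc 1 N))).filter
    (fun p => ({p.1.1, p.1.2} : Multiset ℕ) ≠ ({p.2.1, p.2.2} : Multiset ℕ) ∧
      tdist (y p.1.1 + y p.1.2 - y p.2.1 - y p.2.2) = 0)).card

/-- the sequence `(x_1, -x_1, x_2, -x_2, …)` (1-indexed). -/
def altSeq (x : ℕ → ℝ) : ℕ → ℝ := fun n => if n % 2 = 1 then x ((n + 1) / 2) else -x (n / 2)

lemma altSeq_two_mul_add_one (x : ℕ → ℝ) (a : ℕ) : altSeq x (2 * a + 1) = x (a + 1) := by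
  simp [altSeq, Nat.add_mod, show (2 * a + 1 + 1) / 2 = a + 1 by omega]

lemma altSeq_two_mul_add_two (x : ℕ → ℝ) (a : ℕ) : altSeq x (2 * a + 2) = -x (a + 1) := by
  simp [altSeq, show (2 * a + 2) / 2 = a + 1 by omega]

lemma fourCountZero_le_fourCount (y : ℕ → ℝ) (N : ℕ) {ε : ℝ} (hε : 0 ≤ ε) :
    fourCountZero y N ≤ fourCount y N ε :=
  Finset.card_le_card fun _ hp => by
    simp only [Finset.mem_filter] at hp ⊢
    exact ⟨hp.1, hp.2.1, hp.2.2 ▸ hε⟩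

-- The witnesses are the quadruples `(2a+1, 2a+2, 2b+1, 2b+2)` with `a ≠ b` in `range M`.
lemma card_offDiag_le_fourCountZero (y : ℕ → ℝ) (c : ℝ)
    (hc : ∀ a, y (2 * a + 1) + y (2 * a + 2) = c) (M : ℕ) :
    (Finset.range M).offDiag.card ≤ fourCountZero y (2 * M) := by
  refine Finset.card_le_card_of_injOn
    (fun p => ((2 * p.1 + 1, 2 * p.1 + 2), (2 * p.2 + 1, 2 * p.2 + 2))) ?_ ?_
  · rintro ⟨a, b⟩ hab
    simp only [Finset.coe_offDiag, Set.mem_offDiag, Finset.mem_coe, Finset.mem_range] at hab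
    obtain ⟨ha, hb, hne⟩ := hab
    simp only [Finset.coe_filter, Set.mem_ofPred_eq, Finset.mem_product, Finset.mem_Icc]
    refine ⟨by omega, fun h => ?_, ?_⟩
    · have hmem : 2 * a + 2 ∈ ({2 * b + 1, 2 * b + 2} : Multiset ℕ) := h ▸ by simp
      simp only [Multiset.insert_eq_cons, Multiset.mem_cons, Multiset.mem_singleton] at hmem
      omega
    · rw [show y (2 * a + 1) + y (2 * a + 2) - y (2 * b + 1) - y (2 * b + 2) = 0 by
        linarith [hc a, hc b]]
      simp [tdist]
  · rintro ⟨a, b⟩ - ⟨a', b'⟩ - h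
    simp only [Prod.mk.injEq] at h
    ext <;> simp only <;> omega

lemma sq_sub_le_fourCountZero_altSeq (x : ℕ → ℝ) (M : ℕ) :
    (M : ℝ) ^ 2 - M ≤ fourCountZero (altSeq x) (2 * M) := by
  have hcancel : ∀ a, altSeq x (2 * a + 1) + altSeq x (2 * a + 2) = 0 := fun a => by
    rw [altSeq_two_mul_add_one, altSeq_two_mul_add_two, add_neg_cancel]
  have hcard := card_offDiag_le_fourCountZero _ 0 hcancel M
  rw [Finset.offDiag_card, Finset.card_range] at hcard
  calc (M : ℝ) ^ 2 - M = ((M * M - M : ℕ) : ℝ) := by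
        rw [Nat.cast_sub (Nat.le_mul_self M)]; push_cast; ring
    _ ≤ fourCountZero (altSeq x) (2 * M) := by exact_mod_cast hcard

lemma not_fourfold_poissonian_of_frequently_le_fourCountZero (y : ℕ → ℝ) {c : ℝ} (hc : 0 < c)
    (hfreq : ∃ᶠ N : ℕ in atTop, c * (N : ℝ) ^ 2 ≤ fourCountZero y N) :
    ¬ ∀ s : ℝ, 0 < s →
      Tendsto (fun N : ℕ => (fourCount y N (s / (N : ℝ) ^ 2) : ℝ) / (N : ℝ) ^ 2)
        atTop (nhds (2 * s)) := by
  intro hpois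
  have hsmall := (hpois (c / 4) (by positivity)).eventually_lt_const (by linarith : 2 * (c / 4) < c)
  obtain ⟨N, hN, hlt, hNpos⟩ :=
    (hfreq.and_eventually (hsmall.and (eventually_gt_atTop 0))).exists
  have hNsq : (0 : ℝ) < (N : ℝ) ^ 2 := by positivity
  have hzero_le : (fourCountZero y N : ℝ) ≤ fourCount y N (c / 4 / (N : ℝ) ^ 2) := by
    exact_mod_cast fourCountZero_le_fourCount y N (by positivity)
  rw [div_lt_iff₀ hNsq] at hlt
  linarith

/-- For the sequence `(x_1, -x_1, x_2, -x_2, …)`, the number of nontrivial vanishing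
four-fold differences among the first `N` (even) terms is at least `N²/4 - N/2`; consequently
the sequence does not exhibit Poissonian correlation of four-fold differences. -/
theorem alternating_sequence_not_fourfold_poissonian (x : ℕ → ℝ) :
    (∀ N : ℕ, 2 ≤ N → N % 2 = 0 →
      (N : ℝ) ^ 2 / 4 - (N : ℝ) / 2 ≤ (fourCountZero (altSeq x) N : ℝ)) ∧
    ¬ (∀ s : ℝ, 0 < s →
      Tendsto (fun N : ℕ => (fourCount (altSeq x) N (s / (N : ℝ) ^ 2) : ℝ) / (N : ℝ) ^ 2)
        atTop (nhds (2 * s))) := by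
  have hlower : ∀ N : ℕ, N % 2 = 0 →
      (N : ℝ) ^ 2 / 4 - (N : ℝ) / 2 ≤ (fourCountZero (altSeq x) N : ℝ) := by
    intro N hN
    obtain ⟨M, rfl⟩ : ∃ M, N = 2 * M := ⟨N / 2, by omega⟩
    convert sq_sub_le_fourCountZero_altSeq x M using 1
    push_cast; ring
  -- `N²/4 - N/2 ≥ N²/8` as soon as `N ≥ 4`.
  refine ⟨fun N _ hN => hlower N hN,
    not_fourfold_poissonian_of_frequently_le_fourCountZero _ (by norm_num : (0 : ℝ) < 1 / 8) ?_⟩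
  refine frequently_atTop.mpr fun N₀ => ⟨2 * N₀ + 4, by omega, ?_⟩
  have h4 : (4 : ℝ) ≤ (2 * N₀ + 4 : ℕ) := by push_cast; linarith [N₀.cast_nonneg (α := ℝ)]
  refine le_trans ?_ (hlower _ (by omega))
  nlinarith
end
end

section
/- Let (a_n) be a strictly increasing sequence of positive integers with (1/N²)·E(a_1,...,a_N) → ∞ as N → ∞, where E is the additive energy. Then for every real α and every s > 0, limsup_{N→∞} (1/N²)#{1 ≤ m,n,k,l ≤ N, {m,n} ≠ {k,l} : ‖a_mα + a_nα - a_kα - a_lα‖ ≤ s/N²} = ∞; in particular ({a_nα}) does not exhibit four-fold Poissonian correlation for any α. -/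
open Filter
open scoped Classical BigOperators

noncomputable section

/-- additive energy of `a_1, …, a_N`. -/
def addEnergy (a : ℕ → ℕ) (N : ℕ) : ℕ :=
  ((((Finset.Icc 1 N ×ˢ Finset.Icc 1 N) ×ˢ (Finset.Icc 1 N ×ˢ Finset.Icc 1 N))).filter
    (fun p => (a p.1.1 : ℤ) - (a p.1.2 : ℤ) = (a p.2.1 : ℤ) - (a p.2.2 : ℤ))).card

/-!
If `a_m - a_n = a_k - a_l` then `a_m α + a_l α - a_k α - a_n α = 0` exactly, so the energy quadruple
`(m, n, k, l)`, read as `(m, l, k, n)`, is counted by the four-fold correlation at every scale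
`ε ≥ 0` unless `{m, l} = {k, n}`. Those diagonal quadruples number at most `2 N²`, hence the
normalized counts are at least `E(a_1, …, a_N) / N² - 2 → ∞`.
-/

lemma Multiset.pair_eq_pair_imp {α : Type*} {a b c d : α}
    (h : ({a, b} : Multiset α) = {c, d}) : (c, d) = (a, b) ∨ (c, d) = (b, a) := by
  rw [Multiset.insert_eq_cons, Multiset.insert_eq_cons, Multiset.cons_eq_cons] at h
  aesop

abbrev quadBox (N : ℕ) : Finset ((ℕ × ℕ) × ℕ × ℕ) :=
  (Finset.Icc 1 N ×ˢ Finset.Icc 1 N) ×ˢ (Finset.Icc 1 N ×ˢ Finset.Icc 1 N)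

def swapInner (p : (ℕ × ℕ) × ℕ × ℕ) : (ℕ × ℕ) × ℕ × ℕ :=
  ((p.1.1, p.2.2), (p.2.1, p.1.2))

lemma swapInner_injective : Function.Injective swapInner := by
  rintro ⟨⟨m, n⟩, k, l⟩ ⟨⟨m', n'⟩, k', l'⟩ h
  simp_all [swapInner]

lemma card_filter_pair_eq_pair_le (N : ℕ) :
    ((quadBox N).filter
      (fun p => ({p.1.1, p.1.2} : Multiset ℕ) = {p.2.1, p.2.2})).card ≤ 2 * N ^ 2 := by
  set S := Finset.Icc 1 N ×ˢ Finset.Icc 1 N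
  have hsub : (quadBox N).filter (fun p => ({p.1.1, p.1.2} : Multiset ℕ) = {p.2.1, p.2.2}) ⊆
      S.image (fun q => (q, q)) ∪ S.image (fun q => (q, q.swap)) := by
    rintro ⟨⟨m, n⟩, k, l⟩ hp
    rw [Finset.mem_filter] at hp
    rcases Multiset.pair_eq_pair_imp hp.2 with h | h <;> simp_all [S]
  calc _ ≤ (S.image (fun q => (q, q)) ∪ S.image (fun q => (q, q.swap))).card :=
        Finset.card_le_card hsub
    _ ≤ S.card + S.card :=
        (Finset.card_union_le _ _).trans (add_le_add Finset.card_image_le Finset.card_image_le)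
    _ = 2 * N ^ 2 := by simp [S]; ring

lemma addEnergy_le_fourCount_add (a : ℕ → ℕ) (α : ℝ) (N : ℕ) {ε : ℝ} (hε : 0 ≤ ε) :
    addEnergy a N ≤ fourCount (fun n => (a n : ℝ) * α) N ε + 2 * N ^ 2 := by
  set y : ℕ → ℝ := fun n => (a n : ℝ) * α
  have hmaps : ∀ p ∈ (quadBox N).filter
        (fun p => (a p.1.1 : ℤ) - (a p.1.2 : ℤ) = (a p.2.1 : ℤ) - (a p.2.2 : ℤ)),
      swapInner p ∈ (quadBox N).filter (fun p => ({p.1.1, p.1.2} : Multiset ℕ) ≠ {p.2.1, p.2.2} ∧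
          tdist (y p.1.1 + y p.1.2 - y p.2.1 - y p.2.2) ≤ ε) ∪
        (quadBox N).filter (fun p => ({p.1.1, p.1.2} : Multiset ℕ) = {p.2.1, p.2.2}) := by
    rintro ⟨⟨m, n⟩, k, l⟩ hp
    simp only [Finset.mem_filter, Finset.mem_product] at hp
    obtain ⟨⟨⟨hm, hn⟩, hk, hl⟩, heq⟩ := hp
    have hzero : y m + y l - y k - y n = 0 := by
      have : (a m : ℝ) - a n = a k - a l := by exact_mod_cast heq
      simp only [y]
      linear_combination α * this
    by_cases hdiag : ({m, l} : Multiset ℕ) = {k, n}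
    · exact Finset.mem_union_right _ (by simp_all [swapInner])
    · refine Finset.mem_union_left _ (Finset.mem_filter.2 ⟨by simp_all [swapInner], hdiag, ?_⟩)
      simpa [swapInner, hzero, tdist] using hε
  calc addEnergy a N ≤ _ := Finset.card_le_card_of_injOn swapInner hmaps swapInner_injective.injOn
    _ ≤ _ := Finset.card_union_le _ _
    _ ≤ _ := Nat.add_le_add_left (card_filter_pair_eq_pair_le N) _

lemma tendsto_fourCount_div_sq_atTop (a : ℕ → ℕ)
    (hE : Tendsto (fun N : ℕ => (addEnergy a N : ℝ) / (N : ℝ) ^ 2) atTop atTop)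
    (α : ℝ) {ε : ℕ → ℝ} (hε : ∀ N, 0 ≤ ε N) :
    Tendsto (fun N : ℕ => (fourCount (fun n => (a n : ℝ) * α) N (ε N) : ℝ) / (N : ℝ) ^ 2)
      atTop atTop := by
  refine tendsto_atTop_mono (fun N => ?_) (tendsto_atTop_add_const_right atTop (-2) hE)
  have hcount : (addEnergy a N : ℝ) ≤ fourCount (fun n => (a n : ℝ) * α) N (ε N) + 2 * N ^ 2 := by
    exact_mod_cast addEnergy_le_fourCount_add a α N (hε N)
  have hdiag : 2 * (N : ℝ) ^ 2 / (N : ℝ) ^ 2 ≤ 2 := div_le_of_le_mul₀ (by positivity) zero_le_two le_rfl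
  calc (addEnergy a N : ℝ) / (N : ℝ) ^ 2 + -2
      ≤ (fourCount (fun n => (a n : ℝ) * α) N (ε N) + 2 * N ^ 2) / (N : ℝ) ^ 2 + -2 := by
        gcongr
    _ ≤ _ := by rw [add_div]; linarith

theorem unbounded_additive_energy_fourfold_counts_blow_up_general
    (a : ℕ → ℕ)
    (hE : Tendsto (fun N : ℕ => (addEnergy a N : ℝ) / (N : ℝ) ^ 2) atTop atTop) :
    (∀ α : ℝ, ∀ s : ℝ, 0 < s →
      limsup (fun N : ℕ =>
          (((fourCount (fun n => (a n : ℝ) * α) N (s / (N : ℝ) ^ 2) : ℝ) / (N : ℝ) ^ 2 : ℝ) : EReal))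
        atTop = ⊤) ∧
    (∀ α : ℝ, ¬ (∀ s : ℝ, 0 < s →
      Tendsto (fun N : ℕ =>
          (fourCount (fun n => (a n : ℝ) * α) N (s / (N : ℝ) ^ 2) : ℝ) / (N : ℝ) ^ 2)
        atTop (nhds (2 * s)))) := by
  have blowup (α s : ℝ) (hs : 0 < s) :=
    tendsto_fourCount_div_sq_atTop a hE α (ε := fun N => s / (N : ℝ) ^ 2)
      (fun N => by positivity)
  refine ⟨fun α s hs => ?_, fun α h => ?_⟩
  · exact (EReal.tendsto_coe_nhds_top_iff.2 (blowup α s hs)).limsup_eq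
  · exact not_tendsto_nhds_of_tendsto_atTop (blowup α 1 one_pos) _ (h 1 one_pos)

/-- If `E(a_1,…,a_N)/N² → ∞` then for every `α` and every `s > 0` the normalized four-fold
correlation counts have limsup `∞`; in particular `({a_n α})` is not four-fold Poissonian. -/
theorem unbounded_additive_energy_fourfold_counts_blow_up
    (a : ℕ → ℕ) (hpos : ∀ n, 1 ≤ a n) (hmono : StrictMono a)
    (hE : Tendsto (fun N : ℕ => (addEnergy a N : ℝ) / (N : ℝ) ^ 2) atTop atTop) :
    (∀ α : ℝ, ∀ s : ℝ, 0 < s →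
      limsup (fun N : ℕ =>
          (((fourCount (fun n => (a n : ℝ) * α) N (s / (N : ℝ) ^ 2) : ℝ) / (N : ℝ) ^ 2 : ℝ) : EReal))
        atTop = ⊤) ∧
    (∀ α : ℝ, ¬ (∀ s : ℝ, 0 < s →
      Tendsto (fun N : ℕ =>
          (fourCount (fun n => (a n : ℝ) * α) N (s / (N : ℝ) ^ 2) : ℝ) / (N : ℝ) ^ 2)
        atTop (nhds (2 * s)))) :=
  unbounded_additive_energy_fourfold_counts_blow_up_general a hE
end
end
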